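/- arXiv:2108.10141 — 2 statements merged into one kernel-verified Lean document; each statement's English description precedes it below -/
import Mathlib

section
/- If O is a causal order (topological order) of DAG G*, then the DAG built by the Verma–Pearl construction from O using the d-separation oracle of G* equals G* itself. -/
namespace BOSS

variable {V : Type*}

/-- `a` is an ancestor of / equal to `b` (descendant relation, reflexive-transitive). -/
def desc (E : V → V → Prop) : V → V → Prop := Relation.ReflTransGen E

/-- The interior vertex at index `i` of the walk `p` is a collider. -/
def colliderAt [Inhabited V] (E : V → V → Prop) (p : List V) (i : ℕ) : Prop :=
  E (p.getD (i - 1) default) (p.getD i default) ∧ E (p.getD (i + 1) default) (p.getD i default)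

/-- `p` is a path from `x` to `y` that is active (d-connecting) given conditioning set `Z`:
every interior collider has a descendant in `Z` and every interior non-collider is outside `Z`. -/
def activePath [Inhabited V] (E : V → V → Prop) (Z : Set V) (p : List V) (x y : V) : Prop :=
  2 ≤ p.length ∧ p.head? = some x ∧ p.getLast? = some y ∧ p.Nodup ∧
  p.Chain' (fun a b => E a b ∨ E b a) ∧
  ∀ i, 0 < i → i + 1 < p.length →
    (colliderAt E p i → ∃ d ∈ Z, desc E (p.getD i default) d) ∧
    (¬ colliderAt E p i → p.getD i default ∉ Z)

/-- `x` and `y` are d-connected given `Z` in the graph with edge relation `E`. -/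
def dConn [Inhabited V] (E : V → V → Prop) (x y : V) (Z : Set V) : Prop :=
  ∃ p, activePath E Z p x y

/-- d-separation. -/
def dSep [Inhabited V] (E : V → V → Prop) (x y : V) (Z : Set V) : Prop :=
  ¬ dConn E x y Z

/-- the set of vertices strictly preceding `x` in the permutation (list) `O`. -/
def prefixSet [DecidableEq V] (O : List V) (x : V) : Set V :=
  {y | y ∈ O ∧ O.idxOf y < O.idxOf x}

/-- `O` is a permutation of all the vertices. -/
def isPermOf [Fintype V] (O : List V) : Prop := O.Nodup ∧ ∀ v : V, v ∈ O

/-- `O` is a causal (topological) order of the DAG with edges `E`. -/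
def isCausalOrder [Fintype V] [DecidableEq V] (E : V → V → Prop) (O : List V) : Prop :=
  isPermOf O ∧ ∀ x y, E x y → O.idxOf x < O.idxOf y

/-- Verma–Pearl construction: `y` is a parent of `x` in `dag(O)` iff `y` precedes `x` in `O`
and `x` depends on `y` given `prefix(x, O) \ {y}` (relative to dependence oracle `dep`). -/
def vpParent [DecidableEq V] (dep : V → V → Set V → Prop) (O : List V) (y x : V) : Prop :=
  y ∈ prefixSet O x ∧ dep x y (prefixSet O x \ {y})

/-- The number of edges of the Verma–Pearl DAG built from permutation `O`. -/
noncomputable def vpEdgeCount [DecidableEq V] (dep : V → V → Set V → Prop) (O : List V) : ℕ :=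
  Set.ncard {p : V × V | vpParent dep O p.1 p.2}

/-- acyclicity of an edge relation. -/
def acyclic (E : V → V → Prop) : Prop := ∀ x, ¬ Relation.TransGen E x x

/-- number of edges of a graph given by edge relation `E`. -/
noncomputable def edgeCount (E : V → V → Prop) : ℕ := Set.ncard {p : V × V | E p.1 p.2}

end BOSS

/-!
If `y` precedes `x` in a causal order and `x` and `y` are d-connected given the rest of the
prefix of `x`, look at the first edge of a d-connecting path. If it leaves `x`, then following
the path forward reaches either `y` or a collider with a descendant in the prefix, so `x` would
precede one of its own descendants. If it enters `x` from some `w ≠ y`, then `w` is a parent of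
`x`, hence in the conditioning set, and it is a non-collider on the path, which blocks it.
Conversely, an edge is itself a d-connecting path.
-/

namespace BOSS

variable {V : Type*}

lemma le_of_desc {E : V → V → Prop} {f : V → ℕ} (hf : ∀ a b, E a b → f a < f b) {a b : V}
    (h : desc E a b) : f a ≤ f b := by
  induction h with
  | refl => exact le_rfl
  | tail _ hbc ih => exact ih.trans (hf _ _ hbc).le

section activePath

variable [Inhabited V] {E : V → V → Prop} {Z : Set V} {p : List V} {x y : V}

lemma activePath.getD_zero (hp : activePath E Z p x y) : p.getD 0 default = x := by
  obtain ⟨-, hhead, -⟩ := hp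
  cases p with
  | nil => simp at hhead
  | cons a t => simpa using hhead

lemma activePath.getD_length_sub_one (hp : activePath E Z p x y) :
    p.getD (p.length - 1) default = y := by
  obtain ⟨hlen, -, hlast, -⟩ := hp
  rw [List.getLast?_eq_getElem?, List.getElem?_eq_getElem (by omega)] at hlast
  rw [List.getD_eq_getElem _ _ (by omega)]
  exact Option.some_injective _ hlast

lemma activePath.adj (hp : activePath E Z p x y) {i : ℕ} (hi : i + 1 < p.length) :
    E (p.getD i default) (p.getD (i + 1) default) ∨
      E (p.getD (i + 1) default) (p.getD i default) := by
  rw [List.getD_eq_getElem _ _ (by omega), List.getD_eq_getElem _ _ hi]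
  exact List.isChain_iff_getElem.mp hp.2.2.2.2.1 i hi

lemma activePath.directed_or_desc_mem (hp : activePath E Z p x y)
    (hx : E x (p.getD 1 default)) :
    ∀ j, j + 1 < p.length →
      (desc E x (p.getD j default) ∧ E (p.getD j default) (p.getD (j + 1) default)) ∨
        ∃ d ∈ Z, desc E x d := by
  intro j
  induction j with
  | zero => intro _; rw [hp.getD_zero]; exact .inl ⟨.refl, hx⟩
  | succ j ih =>
    intro hj
    rcases ih (by omega) with ⟨hxj, hfwd⟩ | hZ
    · have hxj' : desc E x (p.getD (j + 1) default) := hxj.tail hfwd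
      rcases hp.adj hj with hnext | hback
      · exact .inl ⟨hxj', hnext⟩
      · have hcoll : colliderAt E p (j + 1) := ⟨hfwd, hback⟩
        obtain ⟨d, hdZ, hd⟩ := (hp.2.2.2.2.2 (j + 1) (by omega) hj).1 hcoll
        exact .inr ⟨d, hdZ, hxj'.trans hd⟩
    · exact .inr hZ

lemma activePath.desc_or_desc_mem (hp : activePath E Z p x y) (hx : E x (p.getD 1 default)) :
    desc E x y ∨ ∃ d ∈ Z, desc E x d := by
  have hlen := hp.1
  rcases hp.directed_or_desc_mem hx (p.length - 2) (by omega) with ⟨hxj, hlast⟩ | hZ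
  · rw [show p.length - 2 + 1 = p.length - 1 by omega, hp.getD_length_sub_one] at hlast
    exact .inl (hxj.tail hlast)
  · exact .inr hZ

lemma activePath.getD_one_notMem (hp : activePath E Z p x y) (hx : ¬ E x (p.getD 1 default))
    (hy : p.getD 1 default ≠ y) : p.getD 1 default ∉ Z := by
  have hlen : 2 < p.length := by
    have h2 := hp.1
    by_contra! h
    exact hy (by simpa [show p.length = 2 by omega] using hp.getD_length_sub_one)
  refine (hp.2.2.2.2.2 1 one_pos hlen).2 fun hcoll => hx ?_
  simpa only [colliderAt, Nat.sub_self, hp.getD_zero] using hcoll.1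

lemma activePath_pair (hxy : x ≠ y) (h : E x y ∨ E y x) : activePath E Z [x, y] x y := by
  refine ⟨by simp, rfl, rfl, by simp [hxy], List.isChain_pair.mpr h, fun i hi hi' => ?_⟩
  simp only [List.length_cons, List.length_nil] at hi'
  omega

end activePath

end BOSS

open BOSS in
theorem vp_causal_order_recovers_graph_general
    {V : Type*} [Fintype V] [DecidableEq V] [Inhabited V]
    (E : V → V → Prop)
    (O : List V) (hO : isCausalOrder E O) :
    ∀ y x, vpParent (dConn E) O y x ↔ E y x := by
  obtain ⟨⟨-, hmem⟩, hord⟩ := hO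
  intro y x
  constructor
  · rintro ⟨⟨-, hyx⟩, p, hp⟩
    set w := p.getD 1 default
    rcases hp.adj (i := 0) (by have := hp.1; omega) with hxw | hwx
    · exfalso
      rcases hp.desc_or_desc_mem (hp.getD_zero ▸ hxw) with hxy | ⟨d, ⟨⟨-, hdx⟩, -⟩, hxd⟩
      · exact absurd (le_of_desc hord hxy) (not_le.mpr hyx)
      · exact absurd (le_of_desc hord hxd) (not_le.mpr hdx)
    · rw [hp.getD_zero] at hwx
      by_cases hwy : w = y
      · exact hwy ▸ hwx
      · have hxw : ¬ E x w := fun h => lt_asymm (hord _ _ h) (hord _ _ hwx)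
        exact absurd ⟨⟨hmem w, hord _ _ hwx⟩, hwy⟩ (hp.getD_one_notMem hxw hwy)
  · intro hyx
    have hlt : O.idxOf y < O.idxOf x := hord _ _ hyx
    exact ⟨⟨hmem y, hlt⟩, [x, y], activePath_pair (by rintro rfl; exact lt_irrefl _ hlt) (.inr hyx)⟩

open BOSS in
/-- the Verma–Pearl construction from a causal order, with the
d-separation oracle of `G*`, recovers `G*` exactly. -/
theorem vp_causal_order_recovers_graph
    {V : Type*} [Fintype V] [DecidableEq V] [Inhabited V]
    (E : V → V → Prop) (hacyc : acyclic E)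
    (O : List V) (hO : isCausalOrder E O) :
    ∀ y x, vpParent (dConn E) O y x ↔ E y x :=
  vp_causal_order_recovers_graph_general E O hO
end

section
/- Under faithfulness, for every permutation O, the edge count of the Verma–Pearl DAG dag(O) is at least |edges(G*)|, with equality if and only if dag(O) is Markov equivalent to G*. -/
/-!
Adjacent vertices of `E` are d-connected given every set, so by faithfulness `dag(O)` contains
every edge of `E`, oriented along `O`: this gives the inequality, and equality of the edge counts
means that the two skeletons agree. For non-adjacent `a` before `b` the set `prefix(b) \ {a}`
d-separates them in `E`, and it contains the middle vertex of `a - c - b` exactly when `c`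
precedes `b`; hence `E` and `dag(O)` have the same unshielded colliders, and by Verma–Pearl they
are Markov equivalent. Conversely, Markov equivalent DAGs have the same skeleton, because
non-adjacent vertices of a DAG are d-separated by the other vertices preceding the later one in a
linear extension.

Verma–Pearl is proved on walks: a walk active in one DAG but not in the other is repaired at a
bad triple, either by cutting out a vertex (possible because the triple is then shielded) or by
replacing a collider by one closer to the conditioning set.
-/

namespace List

theorem triple_infix_iff {α : Type*} {p : List α} {a c b : α} :
    [a, c, b] <:+: p ↔ ∃ k, k + 2 < p.length ∧ p[k]? = a ∧ p[k + 1]? = c ∧ p[k + 2]? = b := by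
  rw [infix_iff_getElem?]
  constructor
  · rintro ⟨k, hk, h⟩
    exact ⟨k, by simp at hk; omega, by simpa using h 0, by simpa [add_comm] using h 1,
      by simpa [add_comm] using h 2⟩
  · rintro ⟨k, hk, h0, h1, h2⟩
    refine ⟨k, by simp; omega, fun i hi => ?_⟩
    simp only [length_cons, length_nil] at hi
    interval_cases i <;> simpa [add_comm]

theorem forall_getD_triple_iff {α : Type*} {p : List α} {d : α} {P : α → α → α → Prop} :
    (∀ i, 0 < i → i + 1 < p.length → P (p.getD (i - 1) d) (p.getD i d) (p.getD (i + 1) d)) ↔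
      ∀ a c b, [a, c, b] <:+: p → P a c b := by
  simp only [List.triple_infix_iff, getD_eq_getElem?_getD]
  constructor
  · rintro h a c b ⟨k, hk, h0, h1, h2⟩
    simpa [h0, h1, h2] using h (k + 1) (by omega) (by omega)
  · intro h i hi0 hi
    obtain ⟨k, rfl⟩ : ∃ k, i = k + 1 := ⟨i - 1, by omega⟩
    exact h _ _ _ ⟨k, by omega, by simp [getElem?_eq_getElem (by omega : k < p.length)],
      by simp [getElem?_eq_getElem hi.le], by simp [getElem?_eq_getElem hi]⟩

theorem triple_infix_append {α : Type*} {a c b : α} {l r : List α}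
    (h : [a, c, b] <:+: l ++ r) :
    [a, c, b] <:+: l ∨ [a, c, b] <:+: r ∨ (∃ l', l = l' ++ [a, c]) ∧ (∃ r', r = b :: r') ∨
      (∃ l', l = l' ++ [a]) ∧ (∃ r', r = c :: b :: r') := by
  induction l with
  | nil => exact .inr (.inl (by simpa using h))
  | cons x l ih =>
    rcases List.infix_cons_iff.mp h with ⟨t, ht⟩ | h
    · match l, ht with
      | [], ht =>
        obtain ⟨rfl, rfl⟩ : a = x ∧ c :: b :: t = r := by simpa using ht
        exact .inr (.inr (.inr ⟨⟨[], rfl⟩, t, rfl⟩))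
      | [y], ht =>
        obtain ⟨rfl, rfl, rfl⟩ : a = x ∧ c = y ∧ b :: t = r := by simpa using ht
        exact .inr (.inr (.inl ⟨⟨[], rfl⟩, t, rfl⟩))
      | y :: z :: l, ht =>
        obtain ⟨rfl, rfl, rfl, -⟩ : a = x ∧ c = y ∧ b = z ∧ _ := by simpa using ht
        exact .inl ⟨[], l, rfl⟩
    · rcases ih h with h | h | ⟨⟨l', rfl⟩, hr⟩ | ⟨⟨l', rfl⟩, hr⟩
      · exact .inl (h.trans (infix_cons infix_rfl))
      · exact .inr (.inl h)
      · exact .inr (.inr (.inl ⟨⟨x :: l', rfl⟩, hr⟩))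
      · exact .inr (.inr (.inr ⟨⟨x :: l', rfl⟩, hr⟩))

theorem exists_eq_append_cons_append_cons_of_not_nodup {α : Type*} {l : List α}
    (h : ¬ l.Nodup) : ∃ xs u ys zs, l = xs ++ u :: (ys ++ u :: zs) := by
  obtain ⟨u, hu⟩ : ∃ u, [u, u] <+ l := by simpa [nodup_iff_sublist] using h
  obtain ⟨r₁, r₂, rfl, h₁, h₂⟩ := cons_sublist_iff.mp hu
  obtain ⟨xs, ys, rfl⟩ := append_of_mem h₁
  obtain ⟨ys', zs, rfl⟩ := append_of_mem (singleton_sublist.mp h₂)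
  exact ⟨xs, u, ys ++ ys', zs, by simp⟩

theorem Nodup.ne_of_triple_infix {α : Type*} {l : List α} {a c b : α} (hl : l.Nodup)
    (h : [a, c, b] <:+: l) : a ≠ b := by
  have := hl.sublist h.sublist
  simp_all

end List

namespace BOSS

open List Relation

variable {V : Type*} {G H E : V → V → Prop} {Z : Set V} {p q : List V}

theorem acyclic.irrefl (hG : acyclic G) (a : V) : ¬ G a a :=
  fun h => hG a (.single h)

theorem acyclic.asymm (hG : acyclic G) {a b : V} (h : G a b) : ¬ G b a :=
  fun h' => hG a (.head h (.single h'))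

theorem acyclic.not_cycle3 (hG : acyclic G) {a b c : V} (hab : G a b) (hbc : G b c) : ¬ G c a :=
  fun hca => hG a (.head hab (.head hbc (.single hca)))

def adj (G : V → V → Prop) (a b : V) : Prop := G a b ∨ G b a

theorem adj.symm {a b : V} (h : adj G a b) : adj G b a := Or.symm h

theorem adj.ne (hG : acyclic G) {a b : V} (h : adj G a b) : a ≠ b := by
  rintro rfl
  exact h.elim (hG.irrefl a) (hG.irrefl a)

def IsCollider (G : V → V → Prop) (a c b : V) : Prop := G a c ∧ G b c

theorem isCollider_comm {a c b : V} : IsCollider G a c b ↔ IsCollider G b c a := and_comm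

theorem IsCollider.symm {a c b : V} (h : IsCollider G a c b) : IsCollider G b c a := ⟨h.2, h.1⟩

/-- The condition `activePath` imposes on an interior vertex `c` with neighbours `a` and `b`. -/
def OpenAt (G : V → V → Prop) (Z : Set V) (a c b : V) : Prop :=
  (IsCollider G a c b → ∃ d ∈ Z, ReflTransGen G c d) ∧ (¬ IsCollider G a c b → c ∉ Z)

theorem OpenAt.symm {a c b : V} (h : OpenAt G Z a c b) : OpenAt G Z b c a :=
  ⟨fun hc => h.1 hc.symm, fun hc => h.2 fun hc' => hc hc'.symm⟩

theorem OpenAt.of_notMem {a c b : V} (hc : c ∉ Z)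
    (hd : IsCollider G a c b → ∃ d ∈ Z, ReflTransGen G c d) : OpenAt G Z a c b :=
  ⟨hd, fun _ => hc⟩

theorem OpenAt.notMem_of_out {a c b : V} (hG : acyclic G) (h : OpenAt G Z a c b) (hcb : G c b) :
    c ∉ Z :=
  h.2 fun h' => hG.asymm hcb h'.2

/-- Like `activePath`, but for walks, which may repeat vertices. -/
structure IsActiveWalk (G : V → V → Prop) (Z : Set V) (p : List V) : Prop where
  isChain : p.IsChain (adj G)
  openAt : ∀ a c b, [a, c, b] <:+: p → OpenAt G Z a c b

def WalkConn (G : V → V → Prop) (Z : Set V) (x y : V) : Prop :=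
  ∃ p, IsActiveWalk G Z p ∧ p.head? = some x ∧ p.getLast? = some y

theorem IsActiveWalk.infix (hp : IsActiveWalk G Z p) (h : q <:+: p) : IsActiveWalk G Z q :=
  ⟨hp.isChain.infix h, fun a c b habc => hp.openAt a c b (habc.trans h)⟩

theorem IsActiveWalk.reverse (hp : IsActiveWalk G Z p) : IsActiveWalk G Z p.reverse where
  isChain := isChain_reverse.mpr (hp.isChain.imp fun _ _ h => h.symm)
  openAt a c b h := (hp.openAt b c a (by simpa using reverse_infix.mpr h)).symm

theorem IsActiveWalk.adj_of_infix (hp : IsActiveWalk G Z p) {a c b : V} (h : [a, c, b] <:+: p) :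
    adj G a c ∧ adj G c b := by
  simpa using hp.isChain.infix h

theorem isActiveWalk_pair {a b : V} (h : adj G a b) : IsActiveWalk G Z [a, b] :=
  ⟨by simpa using h, fun _ _ _ habc => absurd habc.length_le (by simp)⟩

theorem IsActiveWalk.glue {l r : List V} {u : V} (hl : IsActiveWalk G Z (l ++ [u]))
    (hr : IsActiveWalk G Z (u :: r)) (hu : ∀ a ∈ l.getLast?, ∀ b ∈ r.head?, OpenAt G Z a u b) :
    IsActiveWalk G Z (l ++ u :: r) where
  isChain := by
    have := hl.isChain
    rw [isChain_append] at this ⊢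
    exact ⟨this.1, hr.isChain, this.2.2⟩
  openAt a c b h := by
    rcases triple_infix_append h with h | h | ⟨⟨l', rfl⟩, r', hr'⟩ | ⟨⟨l', rfl⟩, r', hr'⟩
    · exact hl.openAt a c b (h.trans (infix_append [] l [u]))
    · exact hr.openAt a c b h
    · obtain ⟨rfl, -⟩ := cons_eq_cons.mp hr'
      exact hl.openAt a c _ ⟨l', [], by simp⟩
    · obtain ⟨rfl, rfl⟩ := cons_eq_cons.mp hr'
      exact hu a (by simp) b (by simp)

/-- The walk has a collider, and its first one is a descendant of `a`. -/
theorem IsActiveWalk.exists_desc_of_out_in (hG : acyclic G) {a b c u : V} {t : List V}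
    (hp : IsActiveWalk G Z (a :: b :: t)) (hab : G a b) (hend : [c, u] <:+ a :: b :: t)
    (huc : G u c) : ∃ d ∈ Z, ReflTransGen G a d := by
  induction t generalizing a b with
  | nil =>
    obtain ⟨rfl, rfl⟩ : c = a ∧ u = b := by simpa using hend.eq_of_length (by simp)
    exact absurd huc (hG.asymm hab)
  | cons v t ih =>
    have hopen := hp.openAt a b v ⟨[], t, rfl⟩
    by_cases hvb : G v b
    · obtain ⟨d, hd, hbd⟩ := hopen.1 ⟨hab, hvb⟩
      exact ⟨d, hd, .head hab hbd⟩
    · have hbv : G b v := (hp.adj_of_infix ⟨[], t, rfl⟩).2.resolve_right hvb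
      have hend' : [c, u] <:+ b :: v :: t :=
        (suffix_cons_iff.mp hend).resolve_left fun h => by simpa using congrArg length h
      obtain ⟨d, hd, hbd⟩ := ih (hp.infix (suffix_cons a _).isInfix) hbv hend'
      exact ⟨d, hd, .head hab hbd⟩

theorem IsActiveWalk.splice (hG : acyclic G) {xs ys zs : List V} {u : V}
    (hp : IsActiveWalk G Z (xs ++ u :: (ys ++ u :: zs))) : IsActiveWalk G Z (xs ++ u :: zs) := by
  obtain ⟨c₁, ys₁, rfl⟩ : ∃ c₁ ys₁, ys = c₁ :: ys₁ := by
    refine exists_cons_of_ne_nil ?_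
    rintro rfl
    have : adj G u u := by simpa using hp.isChain.infix (⟨xs, zs, by simp⟩ : [u, u] <:+: _)
    exact this.ne hG rfl
  obtain ⟨ys₂, c₂, hys₂⟩ : ∃ ys₂ c₂, c₁ :: ys₁ = ys₂ ++ [c₂] :=
    ⟨_, _, (dropLast_append_getLast (cons_ne_nil c₁ ys₁)).symm⟩
  refine (hp.infix ⟨[], c₁ :: ys₁ ++ u :: zs, by simp⟩).glue
    (hp.infix ⟨xs ++ u :: c₁ :: ys₁, [], by simp⟩) ?_
  intro a ha b hb
  obtain ⟨xs, rfl⟩ := getLast?_eq_some_iff.mp ha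
  obtain ⟨zs, rfl⟩ := head?_eq_some_iff.mp hb
  have h₁ : [a, u, c₁] <:+: xs ++ [a] ++ u :: (c₁ :: ys₁ ++ u :: b :: zs) :=
    ⟨xs, ys₁ ++ u :: b :: zs, by simp⟩
  have h₂ : [c₂, u, b] <:+: xs ++ [a] ++ u :: (c₁ :: ys₁ ++ u :: b :: zs) :=
    ⟨xs ++ a :: u :: ys₂, zs, by simp [hys₂]⟩
  refine ⟨fun ⟨hau, hbu⟩ => ?_, fun hnc => ?_⟩
  · by_cases hc₁ : G c₁ u
    · exact (hp.openAt _ _ _ h₁).1 ⟨hau, hc₁⟩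
    by_cases hc₂ : G c₂ u
    · exact (hp.openAt _ _ _ h₂).1 ⟨hc₂, hbu⟩
    -- both ends of the loop `u - c₁ - ⋯ - c₂ - u` leave `u`
    have hloop : IsActiveWalk G Z (u :: c₁ :: (ys₁ ++ [u])) :=
      hp.infix ⟨xs ++ [a], b :: zs, by simp⟩
    refine hloop.exists_desc_of_out_in hG ((hp.adj_of_infix h₁).2.resolve_right hc₁)
      ⟨u :: ys₂, by rw [← cons_append, hys₂]; simp⟩ ((hp.adj_of_infix h₂).1.resolve_left hc₂)
  · by_cases hau : G a u
    · exact (hp.openAt _ _ _ h₂).2 fun h => hnc ⟨hau, h.2⟩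
    · exact (hp.openAt _ _ _ h₁).2 fun h => hau h.1

theorem IsActiveWalk.exists_shorter_of_not_nodup (hG : acyclic G) (hp : IsActiveWalk G Z p)
    (hnd : ¬ p.Nodup) : ∃ q, IsActiveWalk G Z q ∧ q.head? = p.head? ∧ q.getLast? = p.getLast? ∧
      q.length < p.length := by
  obtain ⟨xs, u, ys, zs, rfl⟩ := exists_eq_append_cons_append_cons_of_not_nodup hnd
  exact ⟨_, hp.splice hG, by simp, by simp [getLast?_cons], by simp⟩

theorem IsActiveWalk.exists_nodup (hG : acyclic G) (hp : IsActiveWalk G Z p) :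
    ∃ q, IsActiveWalk G Z q ∧ q.Nodup ∧ q.head? = p.head? ∧ q.getLast? = p.getLast? := by
  induction hn : p.length using Nat.strong_induction_on generalizing p with
  | _ n ih =>
    by_cases hnd : p.Nodup
    · exact ⟨p, hp, hnd, rfl, rfl⟩
    obtain ⟨q, hq, hqx, hqy, hlt⟩ := hp.exists_shorter_of_not_nodup hG hnd
    obtain ⟨r, hr, hrnd, hrx, hry⟩ := ih _ (hn ▸ hlt) hq rfl
    exact ⟨r, hr, hrnd, hrx.trans hqx, hry.trans hqy⟩

theorem activePath_iff [Inhabited V] {x y : V} :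
    activePath G Z p x y ↔ 2 ≤ p.length ∧ p.head? = some x ∧ p.getLast? = some y ∧ p.Nodup ∧
      IsActiveWalk G Z p := by
  constructor
  · rintro ⟨h2, hx, hy, hnd, hc, ho⟩
    exact ⟨h2, hx, hy, hnd, hc, forall_getD_triple_iff.mp ho⟩
  · rintro ⟨h2, hx, hy, hnd, hc, ho⟩
    exact ⟨h2, hx, hy, hnd, hc, forall_getD_triple_iff.mpr ho⟩

theorem dConn_iff_walkConn [Inhabited V] (hG : acyclic G) {x y : V} :
    dConn G x y Z ↔ x ≠ y ∧ WalkConn G Z x y := by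
  constructor
  · rintro ⟨p, hp⟩
    obtain ⟨h2, hx, hy, hnd, hp⟩ := activePath_iff.mp hp
    refine ⟨?_, p, hp, hx, hy⟩
    match p, h2 with
    | a :: b :: t, _ =>
      obtain rfl : a = x := by simpa using hx
      rw [getLast?_cons_cons] at hy
      exact fun hxy => (nodup_cons.mp hnd).1 (hxy ▸ mem_of_getLast? hy)
  · rintro ⟨hxy, p, hp, hx, hy⟩
    obtain ⟨q, hq, hnd, hqx, hqy⟩ := hp.exists_nodup hG
    refine ⟨q, activePath_iff.mpr ⟨?_, hqx.trans hx, hqy.trans hy, hnd, hq⟩⟩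
    match q, hqx.trans hx, hqy.trans hy with
    | [a], hx, hy => simp_all
    | _ :: _ :: _, _, _ => simp

theorem dConn_of_adj [Inhabited V] {x y : V} (hxy : x ≠ y) (h : adj G x y) : dConn G x y Z :=
  ⟨[x, y], activePath_iff.mpr ⟨by simp, rfl, rfl, by simp [hxy], isActiveWalk_pair h⟩⟩

theorem dConn_of_openAt [Inhabited V] (hE : acyclic E) {x c y : V} (hxy : x ≠ y)
    (hxc : adj E x c) (hcy : adj E c y) (hc : OpenAt E Z x c y) : dConn E x y Z := by
  refine (dConn_iff_walkConn hE).mpr ⟨hxy, [x, c, y], ⟨by simp [hxc, hcy], ?_⟩, rfl, rfl⟩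
  intro a c' b h
  obtain ⟨rfl, rfl, rfl⟩ : a = x ∧ c' = c ∧ b = y := by simpa using h.eq_of_length rfl
  exact hc

/-- A walk leaving `x` forwards stays `r`-after `x` up to its first collider, which therefore has
no descendant in the conditioning set; a walk leaving `x` backwards is blocked at once. -/
theorem not_walkConn_of_not_adj {r : V → V → Prop} (hGr : ∀ a b, G a b → r a b)
    (htr : ∀ ⦃a b c⦄, r a b → r b c → r a c) (hirr : ∀ a, ¬ r a a) {x y : V}
    (hxy : ¬ adj G x y) (hyx : r y x) :
    ¬ WalkConn G ({v | r v x} \ {y}) x y := by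
  have hrtg : ∀ {a b}, ReflTransGen G a b → a = b ∨ r a b := fun h => by
    induction h with
    | refl => exact .inl rfl
    | tail _ hbc ih => exact .inr (ih.elim (· ▸ hGr _ _ hbc) (htr · (hGr _ _ hbc)))
  have hforward : ∀ (t : List V) (a b : V), IsActiveWalk G ({v | r v x} \ {y}) (a :: b :: t) →
      G a b → r x b → (a :: b :: t).getLast? ≠ some y := by
    intro t
    induction t with
    | nil =>
      rintro a b - - hxb hb
      obtain rfl : b = y := by simpa using hb
      exact hirr x (htr hxb hyx)
    | cons c t ih =>
      intro a b hp hab hxb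
      by_cases hcb : G c b
      · obtain ⟨d, ⟨hdx, -⟩, hbd⟩ := (hp.openAt a b c ⟨[], t, rfl⟩).1 ⟨hab, hcb⟩
        exact absurd (htr hxb ((hrtg hbd).elim (· ▸ hdx) (htr · hdx))) (hirr x)
      · have hbc := (hp.adj_of_infix ⟨[], t, rfl⟩).2.resolve_right hcb
        rw [getLast?_cons_cons]
        exact ih b c (hp.infix (suffix_cons a _).isInfix) hbc (htr hxb (hGr _ _ hbc))
  rintro ⟨p, hp, hx, hy⟩
  match p, hx with
  | [x'], hx => exact hxy (by simp_all)
  | a :: b :: t, hx =>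
    obtain rfl : a = x := by simpa using hx
    have hab : adj G a b := by simpa using hp.isChain.infix (⟨[], t, rfl⟩ : [a, b] <:+: _)
    rcases hab with hab | hba
    · exact hforward t a b hp hab (hGr _ _ hab) hy
    · cases t with
      | nil =>
        obtain rfl : b = y := by simpa using hy
        exact hxy (.inr hba)
      | cons c t =>
        have hb : b ∉ {v | r v a} \ {y} :=
          (hp.openAt a b c ⟨[], t, rfl⟩).2 fun h => hirr a (htr (hGr _ _ h.1) (hGr _ _ hba))
        obtain rfl : b = y := by simpa [hGr _ _ hba] using hb
        exact hxy (.inr hba)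

theorem acyclic.exists_strict_total_extension (hG : acyclic G) :
    ∃ r : V → V → Prop, (∀ a b, G a b → r a b) ∧ (∀ ⦃a b c⦄, r a b → r b c → r a c) ∧
      (∀ a, ¬ r a a) ∧ ∀ a b, a ≠ b → r a b ∨ r b a := by
  have : IsPartialOrder V (ReflTransGen G) :=
    { refl := fun _ => .refl
      trans := fun _ _ _ => ReflTransGen.trans
      antisymm := fun a b hab hba => by
        by_contra hne
        rcases reflTransGen_iff_eq_or_transGen.mp hab with h | h
        · exact hne h.symm
        rcases reflTransGen_iff_eq_or_transGen.mp hba with h' | h'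
        · exact hne h'
        · exact hG a (h.trans h') }
  obtain ⟨s, hs, hGs⟩ := extend_partialOrder (ReflTransGen G)
  refine ⟨fun a b => s a b ∧ a ≠ b, fun a b hab => ⟨hGs _ _ (.single hab), ?_⟩, ?_, ?_, ?_⟩
  · rintro rfl
    exact hG.irrefl a hab
  · rintro a b c ⟨hab, hne⟩ ⟨hbc, -⟩
    refine ⟨hs.trans _ _ _ hab hbc, ?_⟩
    rintro rfl
    exact hne (hs.antisymm _ _ hab hbc)
  · exact fun a h => h.2 rfl
  · intro a b hne
    exact (hs.total a b).imp (⟨·, hne⟩) (⟨·, hne.symm⟩)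

theorem adj_of_forall_dSep_iff [Inhabited V] (hG : acyclic G) (hH : acyclic H)
    (hGH : ∀ x y Z, dSep G x y Z ↔ dSep H x y Z) {a b : V} (hab : H a b) : adj G a b := by
  by_contra hn
  obtain ⟨r, hGr, htr, hirr, htot⟩ := hG.exists_strict_total_extension
  have hne : a ≠ b := adj.ne hH (.inl hab)
  have key : ∀ x y, adj H x y → ¬ adj G x y → r y x → False := fun x y hH' hG' hyx =>
    (hGH x y _).mp (fun h => not_walkConn_of_not_adj hGr htr hirr hG' hyx
      ((dConn_iff_walkConn hG).mp h).2) (dConn_of_adj (hH'.ne hH) hH')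
  rcases htot a b hne with h | h
  · exact key b a (.inr hab) (fun h' => hn h'.symm) h
  · exact key a b (.inl hab) hn h

def SameSkeleton (G H : V → V → Prop) : Prop := ∀ a b, adj G a b ↔ adj H a b

def SameUnshieldedColliders (G H : V → V → Prop) : Prop :=
  ∀ a c b, a ≠ b → ¬ adj G a b → adj G a c → adj G c b →
    (IsCollider G a c b ↔ IsCollider H a c b)

theorem SameSkeleton.symm (hs : SameSkeleton G H) : SameSkeleton H G := fun a b => (hs a b).symm

theorem SameUnshieldedColliders.symm (hs : SameSkeleton G H) (hv : SameUnshieldedColliders G H) :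
    SameUnshieldedColliders H G := fun a c b hab hn hac hcb =>
  (hv a c b hab (fun h => hn ((hs a b).mp h)) ((hs a c).mpr hac) ((hs c b).mpr hcb)).symm

theorem SameUnshieldedColliders.shielded (hv : SameUnshieldedColliders G H) {a c b : V}
    (hab : a ≠ b) (hac : adj G a c) (hcb : adj G c b)
    (h : ¬ (IsCollider G a c b ↔ IsCollider H a c b)) : adj G a b := by
  by_contra hn
  exact h (hv a c b hab hn hac hcb)

/-- `u → v ← w` is a collider of `H` but not of `G`, so it is shielded. -/
theorem SameUnshieldedColliders.chord (hG : acyclic G) (hv : SameUnshieldedColliders G H)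
    {u v w : V} (huv : G u v) (hvw : G v w) (hHuv : H u v) (hHwv : H w v) : G u w := by
  have hne : u ≠ w := by
    rintro rfl
    exact hG.asymm huv hvw
  have := hv.shielded hne (.inl huv) (.inl hvw) fun h => hG.asymm hvw (h.mpr ⟨hHuv, hHwv⟩).2
  exact this.resolve_right (hG.not_cycle3 huv hvw)

def IsPathInto (G : V → V → Prop) (Z : Set V) (c : V) (l : List V) : Prop :=
  (c :: l).IsChain G ∧ (c :: l).getLast (cons_ne_nil c l) ∈ Z

@[simp]
theorem isPathInto_nil {c : V} : IsPathInto G Z c [] ↔ c ∈ Z := by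
  simp [IsPathInto]

@[simp]
theorem isPathInto_cons {c v : V} {l : List V} :
    IsPathInto G Z c (v :: l) ↔ G c v ∧ IsPathInto G Z v l := by
  simp [IsPathInto, and_assoc]

theorem exists_isPathInto_iff {c : V} :
    (∃ l, IsPathInto G Z c l) ↔ ∃ d ∈ Z, ReflTransGen G c d := by
  constructor
  · rintro ⟨l, hl, hZ⟩
    exact ⟨_, hZ, relationReflTransGen_of_exists_isChain_cons l hl rfl⟩
  · rintro ⟨d, hd, hcd⟩
    obtain ⟨l, hl, rfl⟩ := exists_isChain_cons_of_relationReflTransGen hcd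
    exact ⟨l, hl, hd⟩

/-- The length of a shortest directed `G`-path from `c` into `Z` (`0` if there is none). -/
noncomputable def descDist (G : V → V → Prop) (Z : Set V) (c : V) : ℕ :=
  sInf {n | ∃ l, IsPathInto G Z c l ∧ l.length = n}

theorem descDist_le {c : V} {l : List V} (hl : IsPathInto G Z c l) : descDist G Z c ≤ l.length :=
  Nat.sInf_le ⟨l, hl, rfl⟩

theorem exists_isPathInto_descDist {c : V} (h : ∃ d ∈ Z, ReflTransGen G c d) :
    ∃ l, IsPathInto G Z c l ∧ l.length = descDist G Z c :=
  Nat.sInf_mem (s := {n | ∃ l, IsPathInto G Z c l ∧ l.length = n})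
    (let ⟨l, hl⟩ := exists_isPathInto_iff.mpr h; ⟨_, l, hl, rfl⟩)

/-- Along a `G`-path into `Z` whose first edge `H` keeps, either `H` keeps every edge, or a
chord shortens the path. -/
theorem SameUnshieldedColliders.climb (hG : acyclic G) (hs : SameSkeleton G H)
    (hv : SameUnshieldedColliders G H) {u v : V} {l : List V} (huv : G u v) (hHuv : H u v)
    (hl : IsPathInto G Z v l) :
    (∃ d ∈ Z, ReflTransGen H u d) ∨ ∃ l', IsPathInto G Z u l' ∧ l'.length ≤ l.length := by
  induction l generalizing u v with
  | nil => exact .inl ⟨v, isPathInto_nil.mp hl, .single hHuv⟩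
  | cons w l ih =>
    obtain ⟨hvw, hl⟩ := isPathInto_cons.mp hl
    by_cases hHvw : H v w
    · rcases ih hvw hHvw hl with ⟨d, hd, hvd⟩ | ⟨l', hl', hlen⟩
      · exact .inl ⟨d, hd, .head hHuv hvd⟩
      · exact .inr ⟨v :: l', isPathInto_cons.mpr ⟨huv, hl'⟩, by simpa using hlen⟩
    · have hHwv := ((hs v w).mp (.inl hvw)).resolve_left hHvw
      exact .inr ⟨w :: l, isPathInto_cons.mpr ⟨hv.chord hG huv hvw hHuv hHwv, hl⟩, by simp⟩

/-- `w` is the second vertex of a shortest `G`-path from `c` into `Z`: if `H` kept the edge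
`c → w`, `climb` would give `c` an `H`-descendant in `Z` or a shorter path. -/
theorem SameUnshieldedColliders.exists_replacement (hG : acyclic G) (hs : SameSkeleton G H)
    (hv : SameUnshieldedColliders G H) {a c b : V} (hGc : IsCollider G a c b)
    (hHc : IsCollider H a c b) (hd : ∃ d ∈ Z, ReflTransGen G c d)
    (hnd : ¬ ∃ d ∈ Z, ReflTransGen H c d) :
    ∃ w, IsCollider G a w b ∧ (∃ d ∈ Z, ReflTransGen G w d) ∧ descDist G Z w < descDist G Z c := by
  obtain ⟨l, hl, hlen⟩ := exists_isPathInto_descDist hd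
  cases l with
  | nil => exact absurd ⟨c, isPathInto_nil.mp hl, .refl⟩ hnd
  | cons w l =>
    obtain ⟨hcw, hl⟩ := isPathInto_cons.mp hl
    simp only [length_cons] at hlen
    by_cases hHcw : H c w
    · rcases hv.climb hG hs hcw hHcw hl with h | ⟨l', hl', hle⟩
      · exact absurd h hnd
      · have := descDist_le hl'
        omega
    · have hHwc := ((hs c w).mp (.inl hcw)).resolve_left hHcw
      refine ⟨w, ⟨hv.chord hG hGc.1 hcw hHc.1 hHwc, hv.chord hG hGc.2 hcw hHc.2 hHwc⟩,
        exists_isPathInto_iff.mp ⟨l, hl⟩, ?_⟩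
      have := descDist_le hl
      omega

theorem IsActiveWalk.drop {s t : List V} {a c b : V}
    (hp : IsActiveWalk G Z (s ++ [a, c, b] ++ t)) (hab : adj G a b)
    (ha : ∀ u ∈ s.getLast?, OpenAt G Z u a b)
    (hb : ∀ v ∈ t.head?, OpenAt G Z a b v) : IsActiveWalk G Z (s ++ [a, b] ++ t) := by
  have hbt : IsActiveWalk G Z ([a] ++ b :: t) :=
    (isActiveWalk_pair hab).glue (hp.infix ⟨s ++ [a, c], [], by simp⟩) (by simpa using hb)
  simpa using (hp.infix ⟨[], [c, b] ++ t, by simp⟩ : IsActiveWalk G Z (s ++ [a])).glue hbt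
    (by simpa using ha)

theorem IsActiveWalk.replace {s t : List V} {a c b w : V}
    (hp : IsActiveWalk G Z (s ++ [a, c, b] ++ t)) (haw : adj G a w) (hwb : adj G w b)
    (hw : OpenAt G Z a w b) (ha : ∀ u ∈ s.getLast?, OpenAt G Z u a w)
    (hb : ∀ v ∈ t.head?, OpenAt G Z w b v) : IsActiveWalk G Z (s ++ [a, w, b] ++ t) := by
  have hbt : IsActiveWalk G Z ([w] ++ b :: t) :=
    (isActiveWalk_pair hwb).glue (hp.infix ⟨s ++ [a, c], [], by simp⟩) (by simpa using hb)
  have hwt : IsActiveWalk G Z ([a] ++ w :: b :: t) :=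
    (isActiveWalk_pair haw).glue hbt (by simpa using hw)
  simpa using (hp.infix ⟨[], [c, b] ++ t, by simp⟩ : IsActiveWalk G Z (s ++ [a])).glue hwt
    (by simpa using ha)

theorem IsActiveWalk.drop_collider_of_mem (hG : acyclic G) {s t : List V} {a c b : V}
    (hp : IsActiveWalk G Z (s ++ [a, c, b] ++ t)) (hc : IsCollider G a c b) (hcZ : c ∈ Z)
    (hab : adj G a b) : IsActiveWalk G Z (s ++ [a, b] ++ t) := by
  refine hp.drop hab (fun u hu => ?_) (fun v hv => ?_)
  · obtain ⟨s, rfl⟩ := getLast?_eq_some_iff.mp hu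
    exact .of_notMem ((hp.openAt u a c ⟨s, b :: t, by simp⟩).notMem_of_out hG hc.1)
      fun _ => ⟨c, hcZ, .single hc.1⟩
  · obtain ⟨t, rfl⟩ := head?_eq_some_iff.mp hv
    exact .of_notMem ((hp.openAt c b v ⟨s ++ [a], t, by simp⟩).symm.notMem_of_out hG hc.2)
      fun _ => ⟨c, hcZ, .single hc.2⟩

/-- The configuration `a → b ← c` with `a → c` in `H`: `c` can be cut out of the walk, or `a`
if `a` is a collider `u → a ← c` of the walk. -/
theorem IsActiveWalk.exists_shorter_of_shielded (hG : acyclic G) (hH : acyclic H)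
    (hv : SameUnshieldedColliders G H) {s t : List V} {a c b : V}
    (hp : IsActiveWalk G Z (s ++ [a, c, b] ++ t)) (hnd : (s ++ [a, c, b] ++ t).Nodup)
    (hab : G a b) (hcb : G c b) (hHac : H a c) :
    ∃ q, IsActiveWalk G Z q ∧ q.head? = (s ++ [a, c, b] ++ t).head? ∧
      q.getLast? = (s ++ [a, c, b] ++ t).getLast? ∧ q.length < (s ++ [a, c, b] ++ t).length := by
  have hcZ : c ∉ Z := (hp.openAt a c b ⟨s, t, rfl⟩).notMem_of_out hG hcb
  by_cases htrouble : ∃ l u, s = l ++ [u] ∧ IsCollider G u a c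
  · obtain ⟨l, u, rfl, hua⟩ := htrouble
    have hp' : IsActiveWalk G Z (l ++ [u, a, c] ++ b :: t) := by simpa using hp
    obtain ⟨d, hd, had⟩ := (hp'.openAt u a c ⟨l, b :: t, rfl⟩).1 hua
    have hnd' : (l ++ [u, a, c] ++ b :: t).Nodup := by simpa using hnd
    have huc : adj G u c := hv.shielded (hnd'.ne_of_triple_infix ⟨l, b :: t, rfl⟩)
      (.inl hua.1) (.inr hua.2) fun h => hH.asymm hHac (h.mp hua).2
    refine ⟨_, hp'.drop huc (fun u' hu' => ?_) (fun v hv => ?_), by simp,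
      by simp [getLast?_cons], by simp⟩
    · obtain ⟨l, rfl⟩ := getLast?_eq_some_iff.mp hu'
      have hu := (hp'.openAt u' u a ⟨l, c :: b :: t, by simp⟩).notMem_of_out hG hua.1
      exact .of_notMem hu fun _ => ⟨d, hd, .head hua.1 had⟩
    · obtain rfl : v = b := by simpa using hv.symm
      exact .of_notMem hcZ fun h => absurd h.2 (hG.asymm hcb)
  · refine ⟨_, hp.drop (.inl hab) (fun u hu => ?_) (fun v hv => ?_), by simp,
      by simp [getLast?_cons], by simp⟩
    · obtain ⟨l, rfl⟩ := getLast?_eq_some_iff.mp hu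
      have ha := (hp.openAt u a c ⟨l, b :: t, by simp⟩).2 fun h => htrouble ⟨l, u, rfl, h⟩
      exact .of_notMem ha fun h => absurd h.2 (hG.asymm hab)
    · obtain ⟨t, rfl⟩ := head?_eq_some_iff.mp hv
      have h := hp.openAt c b v ⟨s ++ [a], t, by simp⟩
      exact ⟨fun h' => h.1 ⟨hcb, h'.2⟩, fun h' => h.2 fun h'' => h' ⟨hab, h''.2⟩⟩

theorem IsActiveWalk.exists_shorter_of_new_collider (hG : acyclic G) (hH : acyclic H)
    (hv : SameUnshieldedColliders G H) {s t : List V} {a c b : V}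
    (hp : IsActiveWalk G Z (s ++ [a, c, b] ++ t)) (hnd : (s ++ [a, c, b] ++ t).Nodup)
    (hGc : ¬ IsCollider G a c b) (hHc : IsCollider H a c b) (hab : adj G a b) :
    ∃ q, IsActiveWalk G Z q ∧ q.head? = (s ++ [a, c, b] ++ t).head? ∧
      q.getLast? = (s ++ [a, c, b] ++ t).getLast? ∧ q.length < (s ++ [a, c, b] ++ t).length := by
  obtain ⟨hac, hcb⟩ := hp.adj_of_infix ⟨s, t, rfl⟩
  rcases hab with hab | hba
  · have hcb : G c b := hcb.resolve_right fun hbc =>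
      hG.not_cycle3 hab hbc (hac.resolve_left fun hac => hGc ⟨hac, hbc⟩)
    exact hp.exists_shorter_of_shielded hG hH hv hnd hab hcb hHc.1
  · have hca : G c a := hac.resolve_left fun hac =>
      hG.not_cycle3 hba hac (hcb.resolve_right fun hbc => hGc ⟨hac, hbc⟩)
    have hrev : (s ++ [a, c, b] ++ t).reverse = t.reverse ++ [b, c, a] ++ s.reverse := by simp
    have hp' := hp.reverse
    rw [hrev] at hp'
    obtain ⟨q, hq, hqx, hqy, hlen⟩ :=
      hp'.exists_shorter_of_shielded hG hH hv (hrev ▸ nodup_reverse.mpr hnd) hba hca hHc.2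
    refine ⟨q.reverse, hq.reverse, ?_, ?_, ?_⟩
    · rw [head?_reverse, hqy]
      simp [getLast?_cons]
    · rw [getLast?_reverse, hqx]
      simp [getLast?_cons]
    · simp at hlen ⊢
      omega

/-- Repairing a triple that is open in `G` but not in `H` shortens the walk, or keeps its length
and moves a collider closer to `Z`. -/
theorem IsActiveWalk.exists_smaller (hG : acyclic G) (hH : acyclic H) (hs : SameSkeleton G H)
    (hv : SameUnshieldedColliders G H) (hp : IsActiveWalk G Z p) (hpH : ¬ IsActiveWalk H Z p) :
    ∃ q, IsActiveWalk G Z q ∧ q.head? = p.head? ∧ q.getLast? = p.getLast? ∧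
      Prod.Lex (· < ·) (· < ·) (q.length, (q.map (descDist G Z)).sum)
        (p.length, (p.map (descDist G Z)).sum) := by
  by_cases hnd : p.Nodup
  swap
  · obtain ⟨q, hq, hqx, hqy, hlt⟩ := hp.exists_shorter_of_not_nodup hG hnd
    exact ⟨q, hq, hqx, hqy, .left _ _ hlt⟩
  obtain ⟨a, c, b, ⟨s, t, rfl⟩, hHo⟩ : ∃ a c b, [a, c, b] <:+: p ∧ ¬ OpenAt H Z a c b := by
    by_contra! h
    exact hpH ⟨hp.isChain.imp fun a b => (hs a b).mp, h⟩
  have hGo := hp.openAt a c b ⟨s, t, rfl⟩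
  obtain ⟨hac, hcb⟩ := hp.adj_of_infix ⟨s, t, rfl⟩
  have hab : a ≠ b := hnd.ne_of_triple_infix ⟨s, t, rfl⟩
  by_cases hGc : IsCollider G a c b <;> by_cases hHc : IsCollider H a c b
  · obtain ⟨w, hw, hwd, hlt⟩ := hv.exists_replacement hG hs hGc hHc (hGo.1 hGc)
      fun h => hHo ⟨fun _ => h, fun h' => absurd hHc h'⟩
    refine ⟨_, hp.replace (.inl hw.1) (.inr hw.2) ⟨fun _ => hwd, fun h => absurd hw h⟩
        (fun u hu => ?_) (fun v hv => ?_), by simp, by simp [getLast?_cons],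
      Prod.lex_def.mpr (.inr ⟨by simp, ?_⟩)⟩
    · obtain ⟨s, rfl⟩ := getLast?_eq_some_iff.mp hu
      exact .of_notMem ((hp.openAt u a c ⟨s, b :: t, by simp⟩).notMem_of_out hG hGc.1)
        fun h => absurd h.2 (hG.asymm hw.1)
    · obtain ⟨t, rfl⟩ := head?_eq_some_iff.mp hv
      have hb := (hp.openAt c b v ⟨s ++ [a], t, by simp⟩).symm.notMem_of_out hG hGc.2
      exact .of_notMem hb fun h => absurd h.1 (hG.asymm hw.2)
    · simp
      omega
  · have hcZ : c ∈ Z := by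
      by_contra h
      exact hHo (.of_notMem h fun h' => absurd h' hHc)
    refine ⟨_, hp.drop_collider_of_mem hG hGc hcZ (hv.shielded hab hac hcb (by tauto)), by simp,
      by simp [getLast?_cons], .left _ _ (by simp)⟩
  · obtain ⟨q, hq, hqx, hqy, hlt⟩ :=
      hp.exists_shorter_of_new_collider hG hH hv hnd hGc hHc (hv.shielded hab hac hcb (by tauto))
    exact ⟨q, hq, hqx, hqy, .left _ _ hlt⟩
  · exact absurd (.of_notMem (hGo.2 hGc) fun h' => absurd h' hHc) hHo

theorem SameUnshieldedColliders.walkConn_of_isActiveWalk (hG : acyclic G) (hH : acyclic H)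
    (hs : SameSkeleton G H) (hv : SameUnshieldedColliders G H) {p : List V} {x y : V}
    (hp : IsActiveWalk G Z p) (hx : p.head? = some x) (hy : p.getLast? = some y) :
    WalkConn H Z x y := by
  by_cases hpH : IsActiveWalk H Z p
  · exact ⟨p, hpH, hx, hy⟩
  obtain ⟨q, hq, hqx, hqy, hlt⟩ := hp.exists_smaller hG hH hs hv hpH
  exact hv.walkConn_of_isActiveWalk hG hH hs hq (hqx.trans hx) (hqy.trans hy)
termination_by (p.length, (p.map (descDist G Z)).sum)
decreasing_by exact hlt

/-- One direction of the Verma–Pearl characterisation of Markov equivalence. -/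
theorem dSep_iff_of_sameUnshieldedColliders [Inhabited V] (hG : acyclic G) (hH : acyclic H)
    (hs : SameSkeleton G H) (hv : SameUnshieldedColliders G H) (x y : V) (Z : Set V) :
    dSep G x y Z ↔ dSep H x y Z := by
  simp only [dSep, dConn_iff_walkConn hG, dConn_iff_walkConn hH]
  refine not_congr ⟨fun ⟨hxy, p, hp, hx, hy⟩ => ⟨hxy, ?_⟩, fun ⟨hxy, p, hp, hx, hy⟩ => ⟨hxy, ?_⟩⟩
  · exact hv.walkConn_of_isActiveWalk hG hH hs hp hx hy
  · exact (hv.symm hs).walkConn_of_isActiveWalk hH hG hs.symm hp hx hy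

section VermaPearl

variable [DecidableEq V] {O : List V}

theorem vpParent.idxOf_lt {dep : V → V → Set V → Prop} {y x : V} (h : vpParent dep O y x) :
    O.idxOf y < O.idxOf x :=
  h.1.2

theorem acyclic_vpParent (dep : V → V → Set V → Prop) (O : List V) : acyclic (vpParent dep O) :=
  fun x hx => by
    have key : ∀ {a b}, TransGen (vpParent dep O) a b → O.idxOf a < O.idxOf b := fun h => by
      induction h with
      | single h => exact h.idxOf_lt
      | tail _ h ih => exact ih.trans h.idxOf_lt
    exact lt_irrefl _ (key hx)

theorem idxOf_lt_or_gt (hO : ∀ v, v ∈ O) {u v : V} (h : u ≠ v) :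
    O.idxOf u < O.idxOf v ∨ O.idxOf v < O.idxOf u :=
  lt_or_gt_of_ne fun h' => h ((idxOf_inj (hO u)).mp h')

def orient (O : List V) (q : V × V) : V × V := if O.idxOf q.1 < O.idxOf q.2 then q else q.swap

theorem orient_injOn (hE : acyclic E) : Set.InjOn (orient O) {q | E q.1 q.2} := by
  rintro ⟨u, v⟩ huv ⟨u', v'⟩ huv' h
  simp only [orient] at h
  split_ifs at h <;> simp only [Prod.swap_prod_mk, Prod.mk.injEq] at h <;>
    obtain ⟨rfl, rfl⟩ := h
  · rfl
  · exact absurd huv' (hE.asymm huv)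
  · exact absurd huv' (hE.asymm huv)
  · rfl

theorem mem_image_orient_iff (hO : ∀ v, v ∈ O) (hE : acyclic E) {y x : V} :
    (y, x) ∈ orient O '' {q | E q.1 q.2} ↔ adj E y x ∧ O.idxOf y < O.idxOf x := by
  constructor
  · rintro ⟨⟨u, v⟩, huv, h⟩
    simp only [orient] at h
    split_ifs at h with hlt <;> simp only [Prod.swap_prod_mk, Prod.mk.injEq] at h <;>
      obtain ⟨rfl, rfl⟩ := h
    · exact ⟨.inl huv, hlt⟩
    · exact ⟨.inr huv, (idxOf_lt_or_gt hO (adj.ne hE (.inl huv))).resolve_left hlt⟩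
  · rintro ⟨hE' | hE', hlt⟩
    · exact ⟨(y, x), hE', if_pos hlt⟩
    · exact ⟨(x, y), hE', if_neg hlt.not_gt⟩

section Inhabited

variable [Inhabited V]

/-- Adjacent vertices are d-connected given every set, so `dag(O)` contains the skeleton
of `E`, oriented by `O`. -/
theorem vpParent_iff_idxOf_lt (hO : ∀ v, v ∈ O) (hE : acyclic E) {u v : V} (h : adj E u v) :
    vpParent (dConn E) O u v ↔ O.idxOf u < O.idxOf v :=
  ⟨vpParent.idxOf_lt, fun hlt => ⟨⟨hO u, hlt⟩, dConn_of_adj (h.ne hE).symm h.symm⟩⟩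

theorem sameSkeleton_vpParent (hO : ∀ v, v ∈ O) (hE : acyclic E)
    (hsub : ∀ y x, vpParent (dConn E) O y x → adj E y x) :
    SameSkeleton E (vpParent (dConn E) O) := by
  refine fun u v => ⟨fun h => ?_, fun h => h.elim (hsub u v) fun h => (hsub v u h).symm⟩
  rcases idxOf_lt_or_gt hO (h.ne hE) with hlt | hlt
  · exact .inl ((vpParent_iff_idxOf_lt hO hE h).mpr hlt)
  · exact .inr ((vpParent_iff_idxOf_lt hO hE h.symm).mpr hlt)

/-- For non-adjacent `a` before `b`, the set `prefix(b) \ {a}` d-separates them; it contains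
the middle vertex `c` exactly when `c` precedes `b`, which decides whether `a - c - b` is a
collider of `E`. -/
theorem isCollider_iff_idxOf_lt_of_not_adj (hO : ∀ v, v ∈ O) (hE : acyclic E)
    (hsub : ∀ y x, vpParent (dConn E) O y x → adj E y x) {a c b : V} (hab : ¬ adj E a b)
    (hac : adj E a c) (hcb : adj E c b) (hlt : O.idxOf a < O.idxOf b) :
    IsCollider E a c b ↔ O.idxOf a < O.idxOf c ∧ O.idxOf b < O.idxOf c := by
  have hsep : ¬ dConn E b a (prefixSet O b \ {a}) := fun h => hab (hsub a b ⟨⟨hO a, hlt⟩, h⟩)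
  have hba : b ≠ a := by
    rintro rfl
    exact lt_irrefl _ hlt
  constructor
  · intro hcol
    have hbc : O.idxOf b < O.idxOf c := by
      refine (idxOf_lt_or_gt hO (hcb.ne hE).symm).resolve_right fun hcb' => hsep ?_
      exact dConn_of_openAt hE hba hcb.symm hac.symm
        ⟨fun _ => ⟨c, ⟨⟨hO c, hcb'⟩, (hac.ne hE).symm⟩, .refl⟩, fun h => absurd hcol.symm h⟩
    exact ⟨hlt.trans hbc, hbc⟩
  · rintro ⟨hac', hbc'⟩
    by_contra hcol
    exact hsep (dConn_of_openAt hE hba hcb.symm hac.symm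
      (.of_notMem (fun h => absurd h.1.2 hbc'.not_gt) fun h => absurd h.symm hcol))

theorem sameUnshieldedColliders_vpParent (hO : ∀ v, v ∈ O) (hE : acyclic E)
    (hsub : ∀ y x, vpParent (dConn E) O y x → adj E y x) :
    SameUnshieldedColliders E (vpParent (dConn E) O) := by
  have key : ∀ a c b, ¬ adj E a b → adj E a c → adj E c b → O.idxOf a < O.idxOf b →
      (IsCollider E a c b ↔ IsCollider (vpParent (dConn E) O) a c b) := by
    intro a c b hab hac hcb hlt
    rw [isCollider_iff_idxOf_lt_of_not_adj hO hE hsub hab hac hcb hlt, IsCollider,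
      vpParent_iff_idxOf_lt hO hE hac, vpParent_iff_idxOf_lt hO hE hcb.symm]
  intro a c b hne hab hac hcb
  rcases idxOf_lt_or_gt hO hne with hlt | hlt
  · exact key a c b hab hac hcb hlt
  · exact isCollider_comm.trans <|
      (key b c a (fun h => hab h.symm) hcb.symm hac.symm hlt).trans isCollider_comm

theorem image_orient_subset (hO : ∀ v, v ∈ O) (hE : acyclic E) :
    orient O '' {q | E q.1 q.2} ⊆ {q | vpParent (dConn E) O q.1 q.2} := by
  rintro ⟨y, x⟩ h
  obtain ⟨hyx, hlt⟩ := (mem_image_orient_iff hO hE).mp h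
  exact (vpParent_iff_idxOf_lt hO hE hyx).mpr hlt

variable [Fintype V]

theorem edgeCount_le_vpEdgeCount (hO : ∀ v, v ∈ O) (hE : acyclic E) :
    edgeCount E ≤ vpEdgeCount (dConn E) O := by
  rw [edgeCount, vpEdgeCount, ← (orient_injOn hE).ncard_image]
  exact Set.ncard_le_ncard (image_orient_subset hO hE)

theorem vpEdgeCount_eq_edgeCount_iff (hO : ∀ v, v ∈ O) (hE : acyclic E) :
    vpEdgeCount (dConn E) O = edgeCount E ↔ ∀ y x, vpParent (dConn E) O y x → adj E y x := by
  rw [edgeCount, vpEdgeCount, ← (orient_injOn hE).ncard_image]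
  constructor
  · intro h y x hyx
    have himg := Set.eq_of_subset_of_ncard_le (image_orient_subset hO hE) h.le
    exact ((mem_image_orient_iff hO hE).mp (himg ▸ hyx : (y, x) ∈ _)).1
  · intro h
    refine congrArg Set.ncard (Set.Subset.antisymm (fun q hq => ?_) (image_orient_subset hO hE))
    exact (mem_image_orient_iff hO hE).mpr ⟨h _ _ hq, hq.idxOf_lt⟩

end Inhabited

end VermaPearl

end BOSS

open BOSS in
/-- under faithfulness, every permutation's Verma–Pearl edge count is at least
`|edges(G*)|`, with equality iff the constructed DAG is Markov equivalent to `G*`. -/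
theorem vp_edge_count_lower_bound
    {V : Type*} [Fintype V] [DecidableEq V] [Inhabited V]
    (E : V → V → Prop) (hacyc : acyclic E)
    (indep : V → V → Set V → Prop)
    (hfaith : ∀ x y : V, ∀ Z : Set V, indep x y Z ↔ dSep E x y Z)
    (O : List V) (hO : isPermOf O) :
    edgeCount E ≤ vpEdgeCount (fun a b W => ¬ indep a b W) O ∧
      (vpEdgeCount (fun a b W => ¬ indep a b W) O = edgeCount E ↔
        ∀ x y : V, ∀ Z : Set V,
          dSep E x y Z ↔ dSep (vpParent (fun a b W => ¬ indep a b W) O) x y Z) := by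
  have hdep : (fun a b W => ¬ indep a b W) = dConn E := by
    funext a b W
    rw [hfaith, dSep, not_not]
  rw [hdep, vpEdgeCount_eq_edgeCount_iff hO.2 hacyc]
  refine ⟨edgeCount_le_vpEdgeCount hO.2 hacyc, fun hsub => ?_, fun h y x hyx => ?_⟩
  · exact dSep_iff_of_sameUnshieldedColliders hacyc (acyclic_vpParent _ _)
      (sameSkeleton_vpParent hO.2 hacyc hsub) (sameUnshieldedColliders_vpParent hO.2 hacyc hsub)
  · exact adj_of_forall_dSep_iff hacyc (acyclic_vpParent _ _) h hyx
end
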